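/- The effective Hamiltonian H̄ : ℝᵈ → ℝ is strictly convex: for all p₁ ≠ p₂ in ℝᵈ and all θ ∈ (0,1), H̄(θp₁ + (1−θ)p₂) < θH̄(p₁) + (1−θ)H̄(p₂). -/

import Mathlib

open MeasureTheory Filter Set
open scoped Topology

noncomputable section

/-- `ℝᵈ` as a Euclidean space. -/
abbrev Euc (d : ℕ) := EuclideanSpace ℝ (Fin d)

/-- `ℤᵈ`-periodicity of a function on `ℝᵈ`. -/
def ZPer {d : ℕ} (f : Euc d → ℝ) : Prop :=
  ∀ (x : Euc d) (k : Fin d → ℤ),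
    f (x + (EuclideanSpace.equiv (Fin d) ℝ).symm (fun i => (k i : ℝ))) = f x

/-- The Laplacian of a scalar function on `ℝᵈ`. -/
def lap {d : ℕ} (f : Euc d → ℝ) (x : Euc d) : ℝ :=
  ∑ i : Fin d,
    fderiv ℝ (fun y => fderiv ℝ f y (EuclideanSpace.single i 1)) x (EuclideanSpace.single i 1)

/-- The divergence of a vector field on `ℝᵈ`. -/
def dvg {d : ℕ} (F : Euc d → Euc d) (x : Euc d) : ℝ :=
  ∑ i : Fin d, fderiv ℝ (fun y => F y i) x (EuclideanSpace.single i 1)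

/-- The data `ψ, ν¹, ν²` are smooth, `ℤᵈ`-periodic, with `ν¹ > 0`, `ν² > 0`. -/
def GoodData {d : ℕ} (ψ ν1 ν2 : Euc d → ℝ) : Prop :=
  ContDiff ℝ (⊤ : ℕ∞) ψ ∧ ContDiff ℝ (⊤ : ℕ∞) ν1 ∧ ContDiff ℝ (⊤ : ℕ∞) ν2 ∧
  ZPer ψ ∧ ZPer ν1 ∧ ZPer ν2 ∧ (∀ y, 0 < ν1 y) ∧ (∀ y, 0 < ν2 y)

/-- `(n1, n2)` is a classical solution of the weakly coupled Fokker–Planck system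
`∂ₜn¹ − εΔn¹ − div(n¹ Dψ(x/ε)) + ε⁻¹ν¹(x/ε)n¹ = ε⁻¹ν²(x/ε)n²`,
`∂ₜn² − εΔn² + ε⁻¹ν²(x/ε)n² = ε⁻¹ν¹(x/ε)n¹` on `ℝᵈ × (0,∞)`,
continuous up to `t = 0`. -/
def IsFP {d : ℕ} (ψ ν1 ν2 : Euc d → ℝ) (ε : ℝ) (n1 n2 : Euc d → ℝ → ℝ) : Prop :=
  ContinuousOn (fun q : Euc d × ℝ => n1 q.1 q.2) (univ ×ˢ Ici 0) ∧
  ContinuousOn (fun q : Euc d × ℝ => n2 q.1 q.2) (univ ×ˢ Ici 0) ∧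
  ContDiffOn ℝ (⊤ : ℕ∞) (fun q : Euc d × ℝ => n1 q.1 q.2) (univ ×ˢ Ioi 0) ∧
  ContDiffOn ℝ (⊤ : ℕ∞) (fun q : Euc d × ℝ => n2 q.1 q.2) (univ ×ˢ Ioi 0) ∧
  (∀ (x : Euc d) (t : ℝ), 0 < t →
    deriv (fun s => n1 x s) t - ε * lap (fun y => n1 y t) x
      - dvg (fun y => n1 y t • gradient ψ (ε⁻¹ • y)) x
      + ε⁻¹ * ν1 (ε⁻¹ • x) * n1 x t = ε⁻¹ * ν2 (ε⁻¹ • x) * n2 x t) ∧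
  (∀ (x : Euc d) (t : ℝ), 0 < t →
    deriv (fun s => n2 x s) t - ε * lap (fun y => n2 y t) x
      + ε⁻¹ * ν2 (ε⁻¹ • x) * n2 x t = ε⁻¹ * ν1 (ε⁻¹ • x) * n1 x t)

/-- `(φ1, φ2)` is a smooth `ℤᵈ`-periodic solution of the cell problem at `p` with constant `lam`:
`−Δφ¹ + |Dφ¹+p|² − Dψ·(Dφ¹+p) + Δψ + ν² e^{φ¹−φ²} = ν¹ + λ`,
`−Δφ² + |Dφ²+p|² + ν¹ e^{φ²−φ¹} = ν² + λ`. -/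
def IsCellSol {d : ℕ} (ψ ν1 ν2 : Euc d → ℝ) (p : Euc d) (lam : ℝ) (φ1 φ2 : Euc d → ℝ) : Prop :=
  ContDiff ℝ (⊤ : ℕ∞) φ1 ∧ ContDiff ℝ (⊤ : ℕ∞) φ2 ∧ ZPer φ1 ∧ ZPer φ2 ∧
  (∀ y, -lap φ1 y + ‖gradient φ1 y + p‖ ^ 2
      - (@inner ℝ _ _ (gradient ψ y) (gradient φ1 y + p)) + lap ψ y
      + ν2 y * Real.exp (φ1 y - φ2 y) = ν1 y + lam) ∧
  (∀ y, -lap φ2 y + ‖gradient φ2 y + p‖ ^ 2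
      + ν1 y * Real.exp (φ2 y - φ1 y) = ν2 y + lam)

/-!
Let `(u¹, u²)`, `(v¹, v²)`, `(w¹, w²)` solve the cell problem at `p₁`, `p₂` and
`p = θ p₁ + (1 - θ) p₂`, and suppose `H̄(p) ≥ θ H̄(p₁) + (1 - θ) H̄(p₂)`. The periodic defects
`hⁱ = θ uⁱ + (1 - θ) vⁱ - wⁱ` are compared at a maximum point of `max h¹ h²` where `hⁱ` is the
larger one: the first- and second-order conditions, the identity
`θ|a|² + (1 - θ)|b|² = |θa + (1 - θ)b|² + θ(1 - θ)|a - b|²` and the convexity of `exp` turn the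
combination `θ·(eq at p₁) + (1 - θ)·(eq at p₂) - (eq at p)` into an inequality bounding
`θ(1 - θ)|Duⁱ - Dvⁱ + p₁ - p₂|²` plus a nonnegative coupling term by
`θ H̄(p₁) + (1 - θ) H̄(p₂) - H̄(p) ≤ 0`.

If `max h¹ h²` is not constant, adding a small Gaussian bump centred at a non-maximal point moves
the maximum to an annulus where the bump is a strict subsolution of the linearised operator, which
contradicts the inequality (Hopf's argument). If it is constant, the strict monotonicity of the
coupling forces `h² ≤ h¹`, so every point maximises `h¹` and `D(u¹ - v¹) ≡ p₂ - p₁`; since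
`u¹ - v¹` is periodic, `p₁ = p₂`.
-/

open InnerProductSpace Laplacian

section Gradient

variable {F : Type*} [NormedAddCommGroup F] [InnerProductSpace ℝ F] [CompleteSpace F]
  {f g : F → ℝ} {x : F}

theorem gradient_add (hf : DifferentiableAt ℝ f x) (hg : DifferentiableAt ℝ g x) :
    gradient (f + g) x = gradient f x + gradient g x := by
  simp [gradient, fderiv_add hf hg]

theorem gradient_sub (hf : DifferentiableAt ℝ f x) (hg : DifferentiableAt ℝ g x) :
    gradient (f - g) x = gradient f x - gradient g x := by
  simp [gradient, fderiv_sub hf hg]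

theorem gradient_const_smul (c : ℝ) (hf : DifferentiableAt ℝ f x) :
    gradient (c • f) x = c • gradient f x := by
  simp [gradient, fderiv_const_smul hf]

theorem gradient_zero (x : F) : gradient (0 : F → ℝ) x = 0 :=
  gradient_fun_const x 0

theorem ContDiff.continuous_gradient (hf : ContDiff ℝ 1 f) : Continuous (gradient f) :=
  (toDual ℝ F).symm.continuous.comp (hf.continuous_fderiv one_ne_zero)

end Gradient

section SecondDerivative

theorem IsLocalMax.deriv_deriv_nonpos {g : ℝ → ℝ} {t : ℝ} (h : IsLocalMax g t)
    (hg : ContinuousAt g t) : deriv (deriv g) t ≤ 0 := by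
  by_contra! hpos
  have hconst : g =ᶠ[𝓝 t] fun _ => g t := by
    filter_upwards [h, isLocalMin_of_deriv_deriv_pos hpos h.deriv_eq_zero hg] with s hs hs'
    exact le_antisymm hs hs'
  have hderiv : deriv g =ᶠ[𝓝 t] fun _ => 0 := by
    filter_upwards [hconst.deriv] with s hs
    simp [hs]
  simp [hderiv.deriv_eq] at hpos

variable {E : Type*} [NormedAddCommGroup E] [NormedSpace ℝ E] {f : E → ℝ} {x : E}

theorem IsLocalMax.fderiv_fderiv_apply_nonpos (h : IsLocalMax f x) (hf : ContDiff ℝ 2 f)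
    (e : E) : fderiv ℝ (fun y => fderiv ℝ f y e) x e ≤ 0 := by
  have hline (t : ℝ) : HasDerivAt (fun s : ℝ => x + s • e) e t := by
    simpa using ((hasDerivAt_id t).smul_const e).const_add x
  have hf₁ : Differentiable ℝ f := hf.differentiable (by norm_num)
  have hf₂ : Differentiable ℝ (fun y => fderiv ℝ f y e) := fun y =>
    (((hf.fderiv_right (m := 1) (by norm_num)).differentiable (by norm_num)) y).clm_apply
      (differentiableAt_const e)
  have hfirst : deriv (fun s : ℝ => f (x + s • e)) = fun s => fderiv ℝ f (x + s • e) e :=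
    funext fun s => ((hf₁ _).hasFDerivAt.comp_hasDerivAt s (hline s)).deriv
  have hsecond : HasDerivAt (fun s : ℝ => fderiv ℝ f (x + s • e) e)
      (fderiv ℝ (fun y => fderiv ℝ f y e) (x + (0 : ℝ) • e) e) 0 :=
    (hf₂ _).hasFDerivAt.comp_hasDerivAt 0 (hline 0)
  have hmax : IsLocalMax (fun s : ℝ => f (x + s • e)) 0 :=
    IsLocalMax.comp_continuous (by simpa using h) (hline 0).continuousAt
  have := hmax.deriv_deriv_nonpos (hf₁.continuous.continuousAt.comp (hline 0).continuousAt)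
  rwa [hfirst, hsecond.deriv, zero_smul, add_zero] at this

end SecondDerivative

section Laplacian

variable {d : ℕ} {f g : Euc d → ℝ} {x : Euc d}

theorem lap_eq_laplacian (hf : ContDiffAt ℝ 2 f x) : lap f x = Δ f x := by
  have hf' : DifferentiableAt ℝ (fderiv ℝ f) x :=
    (hf.fderiv_right (m := 1) (by norm_num)).differentiableAt (by norm_num)
  rw [laplacian_eq_iteratedFDeriv_orthonormalBasis f (EuclideanSpace.basisFun (Fin d) ℝ), lap]
  refine Finset.sum_congr rfl fun i _ => ?_
  rw [iteratedFDeriv_two_apply, fderiv_clm_apply hf' (differentiableAt_const _)]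
  simp

theorem lap_add (hf : ContDiffAt ℝ 2 f x) (hg : ContDiffAt ℝ 2 g x) :
    lap (f + g) x = lap f x + lap g x := by
  rw [lap_eq_laplacian (f := f + g) (hf.add hg), lap_eq_laplacian hf, lap_eq_laplacian hg,
    hf.laplacian_add hg]

theorem lap_sub (hf : ContDiffAt ℝ 2 f x) (hg : ContDiffAt ℝ 2 g x) :
    lap (f - g) x = lap f x - lap g x := by
  rw [lap_eq_laplacian (f := f - g) (hf.sub hg), lap_eq_laplacian hf, lap_eq_laplacian hg,
    hf.laplacian_sub hg]

theorem lap_const_smul (c : ℝ) (hf : ContDiffAt ℝ 2 f x) : lap (c • f) x = c * lap f x := by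
  rw [lap_eq_laplacian (f := c • f) (hf.const_smul c), lap_eq_laplacian hf, laplacian_smul c hf,
    smul_eq_mul]

theorem lap_zero (x : Euc d) : lap 0 x = 0 := by
  simp [lap]

theorem lap_nonpos_of_isLocalMax (hf : ContDiff ℝ 2 f) (h : IsLocalMax f x) : lap f x ≤ 0 :=
  Finset.sum_nonpos fun _ _ => h.fderiv_fderiv_apply_nonpos hf _

end Laplacian

section Periodic

theorem EuclideanSpace.norm_le_sqrt_card_mul {ι : Type*} [Fintype ι] {z : EuclideanSpace ℝ ι}
    {a : ℝ} (ha : 0 ≤ a) (h : ∀ i, |z i| ≤ a) : ‖z‖ ≤ √(Fintype.card ι) * a := by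
  rw [EuclideanSpace.norm_eq, ← Real.sqrt_sq ha, ← Real.sqrt_mul (Nat.cast_nonneg _)]
  refine Real.sqrt_le_sqrt ?_
  calc ∑ i, ‖z i‖ ^ 2 ≤ ∑ _i : ι, a ^ 2 :=
        Finset.sum_le_sum fun i _ => pow_le_pow_left₀ (norm_nonneg _) (h i) 2
    _ = Fintype.card ι * a ^ 2 := by simp

variable {d : ℕ} {f g : Euc d → ℝ}

theorem ZPer.exists_eq_norm_sub_le (hf : ZPer f) (x ξ : Euc d) :
    ∃ y, f y = f x ∧ ‖y - ξ‖ ≤ √d / 2 := by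
  refine ⟨x + (EuclideanSpace.equiv (Fin d) ℝ).symm (fun i => (round (ξ i - x i) : ℝ)),
    hf x _, ?_⟩
  refine (EuclideanSpace.norm_le_sqrt_card_mul (by norm_num : (0 : ℝ) ≤ 1 / 2) fun i => ?_).trans_eq
    (by rw [Fintype.card_fin, ← div_eq_mul_one_div])
  calc _ = |ξ i - x i - round (ξ i - x i)| := by
        rw [abs_sub_comm]
        congr 1
        simp
        ring
    _ ≤ 1 / 2 := abs_sub_round _

theorem ZPer.exists_forall_le (hf : ZPer f) (hc : Continuous f) : ∃ x, ∀ y, f y ≤ f x := by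
  obtain ⟨x, -, hx⟩ := (isCompact_closedBall (0 : Euc d) (√d / 2)).exists_isMaxOn
    ⟨0, Metric.mem_closedBall_self (by positivity)⟩ hc.continuousOn
  refine ⟨x, fun y => ?_⟩
  obtain ⟨z, hz, hzball⟩ := hf.exists_eq_norm_sub_le y 0
  exact hz ▸ hx (by simpa using hzball)

theorem ZPer.eq_zero_of_gradient_eq (hf : ZPer f) (hdiff : Differentiable ℝ f) {c : Euc d}
    (h : ∀ y, gradient f y = c) : c = 0 := by
  have hconst (y : Euc d) : f y - ⟪c, y⟫_ℝ = f 0 - ⟪c, 0⟫_ℝ :=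
    is_const_of_fderiv_eq_zero (hdiff.sub (innerSL ℝ c).differentiable) (fun y => by
      rw [fderiv_sub (hdiff y) (innerSL ℝ c).differentiableAt, (innerSL ℝ c).fderiv]
      ext v
      simp [← inner_gradient_left, h]) y 0
  ext i
  have hsingle : (EuclideanSpace.equiv (Fin d) ℝ).symm
      (fun j => ((Pi.single i 1 : Fin d → ℤ) j : ℝ)) = EuclideanSpace.single i 1 := by
    ext j
    by_cases hj : j = i <;> simp [hj]
  have := hconst (0 + (EuclideanSpace.equiv (Fin d) ℝ).symm
    (fun j => ((Pi.single i 1 : Fin d → ℤ) j : ℝ)))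
  rw [hf 0, hsingle] at this
  simpa [EuclideanSpace.inner_single_right] using this

theorem ZPer.sub (hf : ZPer f) (hg : ZPer g) : ZPer (f - g) :=
  fun x k => by simp only [Pi.sub_apply, hf x k, hg x k]

theorem ZPer.sup (hf : ZPer f) (hg : ZPer g) : ZPer (f ⊔ g) :=
  fun x k => by simp only [Pi.sup_apply, hf x k, hg x k]

end Periodic

section GaussBump

variable {E : Type*} [NormedAddCommGroup E] {β : ℝ} {ξ x y : E}

def gaussBump (β : ℝ) (ξ y : E) : ℝ := Real.exp (-β * ‖y - ξ‖ ^ 2)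

theorem gaussBump_pos : 0 < gaussBump β ξ y := Real.exp_pos _

theorem gaussBump_le_one (hβ : 0 ≤ β) : gaussBump β ξ y ≤ 1 :=
  Real.exp_le_one_iff.2 (by nlinarith [norm_nonneg (y - ξ)])

theorem gaussBump_lt_gaussBump (hβ : 0 < β) (h : ‖x - ξ‖ < ‖y - ξ‖) :
    gaussBump β ξ y < gaussBump β ξ x :=
  Real.exp_lt_exp.2 (by nlinarith [pow_lt_pow_left₀ h (norm_nonneg _) two_ne_zero])

variable [InnerProductSpace ℝ E]

theorem contDiff_gaussBump {n : WithTop ℕ∞} : ContDiff ℝ n (gaussBump β ξ) :=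
  Real.contDiff_exp.comp
    (contDiff_const.mul ((contDiff_norm_sq ℝ).comp (contDiff_id.sub contDiff_const)))

theorem hasFDerivAt_gaussBump :
    HasFDerivAt (gaussBump β ξ) ((-2 * β * gaussBump β ξ x) • innerSL ℝ (x - ξ)) x := by
  refine (((hasFDerivAt_id x).sub_const ξ).norm_sq.const_mul (-β)).exp.congr_fderiv ?_
  ext v
  simp [gaussBump]
  ring

theorem fderiv_gaussBump_apply (v : E) :
    fderiv ℝ (gaussBump β ξ) x v = -2 * β * gaussBump β ξ x * ⟪x - ξ, v⟫_ℝ := by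
  simp [hasFDerivAt_gaussBump.fderiv, inner_sub_left]

theorem gradient_gaussBump [CompleteSpace E] :
    gradient (gaussBump β ξ) x = (-2 * β * gaussBump β ξ x) • (x - ξ) :=
  ext_inner_right ℝ fun v => by
    rw [inner_gradient_left, fderiv_gaussBump_apply, real_inner_smul_left]

theorem fderiv_fderiv_gaussBump_apply (v : E) :
    fderiv ℝ (fun y => fderiv ℝ (gaussBump β ξ) y v) x v
      = gaussBump β ξ x * (4 * β ^ 2 * ⟪x - ξ, v⟫_ℝ ^ 2 - 2 * β * ‖v‖ ^ 2) := by
  have hfun : (fun y => fderiv ℝ (gaussBump β ξ) y v)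
      = fun y => -2 * β * (gaussBump β ξ y * innerSL ℝ v (y - ξ)) := by
    ext y
    rw [fderiv_gaussBump_apply, innerSL_apply_apply, real_inner_comm]
    ring
  have hlin : HasFDerivAt (fun y => innerSL ℝ v (y - ξ)) (innerSL ℝ v) x :=
    (innerSL ℝ v).hasFDerivAt.comp x ((hasFDerivAt_id x).sub_const ξ)
  rw [hfun, ((hasFDerivAt_gaussBump.fun_mul hlin).const_mul (-2 * β)).fderiv]
  simp only [smul_apply, add_apply, innerSL_apply_apply, smul_eq_mul,
    real_inner_self_eq_norm_sq, real_inner_comm v]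
  ring

end GaussBump

section Barrier

variable {d : ℕ}

theorem lap_gaussBump {β : ℝ} {ξ x : Euc d} :
    lap (gaussBump β ξ) x = gaussBump β ξ x * (4 * β ^ 2 * ‖x - ξ‖ ^ 2 - 2 * β * d) := by
  simp [lap, fderiv_fderiv_gaussBump_apply, EuclideanSpace.inner_single_right,
    EuclideanSpace.real_norm_sq_eq, ← Finset.mul_sum, Finset.sum_sub_distrib, mul_comm (d : ℝ)]

theorem lap_sub_inner_gradient_gaussBump_pos {β : ℝ} {ξ x b : Euc d} (hβ : 0 < β)
    (h : ‖b‖ * ‖x - ξ‖ + d < 2 * β * ‖x - ξ‖ ^ 2) :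
    0 < lap (gaussBump β ξ) x - ⟪b, gradient (gaussBump β ξ) x⟫_ℝ := by
  have hb : -(‖b‖ * ‖x - ξ‖) ≤ ⟪b, x - ξ⟫_ℝ := neg_le_of_abs_le (abs_real_inner_le_norm b _)
  have hpos : 0 < 2 * β * gaussBump β ξ x := mul_pos (by positivity) gaussBump_pos
  rw [lap_gaussBump, gradient_gaussBump, real_inner_smul_right]
  calc (0 : ℝ) < 2 * β * gaussBump β ξ x * (2 * β * ‖x - ξ‖ ^ 2 - d + ⟪b, x - ξ⟫_ℝ) :=
        mul_pos hpos (by linarith)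
    _ = _ := by ring

variable {H : Euc d → ℝ}

/-- The bump lifts a maximum point of `H` brought within `√d / 2` of `ξ` above everything outside
that ball, while near `ξ` it cannot make up for the gap `H < max H - κ`. -/
theorem ZPer.exists_isMax_add_gaussBump (hH : ZPer H) (hc : Continuous H) {xM ξ : Euc d}
    (hxM : ∀ y, H y ≤ H xM) {κ r β : ℝ} (hκ : 0 < κ) (hβ : 0 < β)
    (hball : ∀ y ∈ Metric.closedBall ξ r, H y + κ < H xM) :
    ∃ x₀, r < ‖x₀ - ξ‖ ∧ ‖x₀ - ξ‖ ≤ √d / 2 ∧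
      ∀ y, H y + κ * gaussBump β ξ y ≤ H x₀ + κ * gaussBump β ξ x₀ := by
  obtain ⟨a, ha, haξ⟩ := hH.exists_eq_norm_sub_le xM ξ
  have hmem {y : Euc d} : y ∈ Metric.closedBall ξ (√d / 2) ↔ ‖y - ξ‖ ≤ √d / 2 := by
    simp [dist_eq_norm]
  obtain ⟨x₀, hx₀, hmax⟩ := (isCompact_closedBall ξ (√d / 2)).exists_isMaxOn ⟨a, hmem.2 haξ⟩
    (hc.add (continuous_const.mul (contDiff_gaussBump (n := 0)).continuous)).continuousOn
  have hmax' {y : Euc d} (hy : ‖y - ξ‖ ≤ √d / 2) :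
      H y + κ * gaussBump β ξ y ≤ H x₀ + κ * gaussBump β ξ x₀ :=
    hmax (hmem.2 hy)
  have ha_gt : H xM < H a + κ * gaussBump β ξ a := by
    linarith [mul_pos hκ (gaussBump_pos (β := β) (ξ := ξ) (y := a))]
  refine ⟨x₀, ?_, hmem.1 hx₀, fun y => ?_⟩
  · by_contra! hle
    have h₁ := hball x₀ (by simpa [dist_eq_norm] using hle)
    have h₂ : κ * gaussBump β ξ x₀ ≤ κ := mul_le_of_le_one_right hκ.le (gaussBump_le_one hβ.le)
    linarith [hmax' haξ]
  · by_cases hy : ‖y - ξ‖ ≤ √d / 2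
    · exact hmax' hy
    · have := gaussBump_lt_gaussBump hβ (haξ.trans_lt (not_le.1 hy))
      nlinarith [hxM y, hmax' haξ]

/-- Hopf's barrier: `Γ` is a small multiple of a steep Gaussian bump centred at a point where `H`
is not maximal. -/
theorem ZPer.exists_barrier {K : Euc d → ℝ} (hH : ZPer H) (hHc : Continuous H)
    (hK : Continuous K) (hne : ∃ ξ x, H ξ < H x) :
    ∃ Γ : Euc d → ℝ, ContDiff ℝ 2 Γ ∧ ∃ x₀, (∀ y, H y + Γ y ≤ H x₀ + Γ x₀) ∧
      ∀ b : Euc d, ‖b‖ ≤ K x₀ → 0 < lap Γ x₀ - ⟪b, gradient Γ x₀⟫_ℝ := by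
  obtain ⟨ξ, x, hξ⟩ := hne
  obtain ⟨xM, hxM⟩ := hH.exists_forall_le hHc
  set κ := (H xM - H ξ) / 2 with hκ_def
  have hκ : 0 < κ := by linarith [hxM x]
  obtain ⟨r, hr, hball⟩ : ∃ r > 0, ∀ y ∈ Metric.closedBall ξ r, H y < H ξ + κ :=
    Metric.nhds_basis_closedBall.eventually_iff.1
      (hHc.continuousAt.eventually (gt_mem_nhds (lt_add_of_pos_right _ hκ)))
  obtain ⟨B, hB⟩ := (isCompact_closedBall ξ (√d / 2)).exists_bound_of_continuousOn hK.continuousOn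
  have hB₀ : 0 ≤ B := (norm_nonneg _).trans (hB ξ (Metric.mem_closedBall_self (by positivity)))
  set β := (d + B * (√d / 2) + 1) / (2 * r ^ 2) with hβ_def
  have hβ : 0 < β := by positivity
  obtain ⟨x₀, hr₀, hR₀, hmax⟩ := hH.exists_isMax_add_gaussBump hHc hxM hκ hβ
    (fun y hy => by linarith [hball y hy])
  refine ⟨κ • gaussBump β ξ, contDiff_gaussBump.const_smul κ, x₀, hmax, fun b hb => ?_⟩
  have hΓ : ContDiffAt ℝ 2 (gaussBump β ξ) x₀ := contDiff_gaussBump.contDiffAt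
  rw [lap_const_smul κ hΓ, gradient_const_smul κ (hΓ.differentiableAt (by norm_num)),
    real_inner_smul_right, ← mul_sub]
  refine mul_pos hκ (lap_sub_inner_gradient_gaussBump_pos hβ ?_)
  have hbB : ‖b‖ ≤ B :=
    hb.trans ((le_abs_self _).trans (hB x₀ (by simpa [dist_eq_norm] using hR₀)))
  have hβr : 2 * β * r ^ 2 = d + B * (√d / 2) + 1 := by
    rw [hβ_def]
    field_simp
  calc ‖b‖ * ‖x₀ - ξ‖ + d ≤ B * (√d / 2) + d := by gcongr
    _ < 2 * β * r ^ 2 := by linarith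
    _ ≤ 2 * β * ‖x₀ - ξ‖ ^ 2 := by gcongr

end Barrier

section ConvexDefect

theorem norm_smul_add_one_sub_smul_sq {F : Type*} [NormedAddCommGroup F] [InnerProductSpace ℝ F]
    (θ : ℝ) (a b : F) :
    ‖θ • a + (1 - θ) • b‖ ^ 2 = θ * ‖a‖ ^ 2 + (1 - θ) * ‖b‖ ^ 2 - θ * (1 - θ) * ‖a - b‖ ^ 2 := by
  simp only [← real_inner_self_eq_norm_sq, inner_add_left, inner_add_right, inner_sub_left,
    inner_sub_right, real_inner_smul_left, real_inner_smul_right, real_inner_comm a b]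
  ring

variable {α : Type*} {θ : ℝ}

def convexDefect (θ : ℝ) (u v w : α → ℝ) : α → ℝ := θ • u + (1 - θ) • v - w

theorem convexDefect_apply (u v w : α → ℝ) (x : α) :
    convexDefect θ u v w x = θ * u x + (1 - θ) * v x - w x := rfl

theorem sub_convexDefect (u u' v v' w w' : α → ℝ) (x : α) :
    convexDefect θ u v w x - convexDefect θ u' v' w' x
      = θ * (u x - u' x) + (1 - θ) * (v x - v' x) - (w x - w' x) := by
  simp only [convexDefect_apply]
  ring

theorem isLocalMax_add_of_le [TopologicalSpace α] {f H Γ : α → ℝ} {x₀ : α}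
    (hmax : ∀ y, H y + Γ y ≤ H x₀ + Γ x₀) (hf : f ≤ H) (hx₀ : H x₀ ≤ f x₀) :
    IsLocalMax (f + Γ) x₀ :=
  Filter.Eventually.of_forall fun y => by
    simp only [Pi.add_apply]
    linarith [hmax y, hf y]

theorem ContDiff.convexDefect [NormedAddCommGroup α] [NormedSpace ℝ α] {n : WithTop ℕ∞}
    {u v w : α → ℝ} (hu : ContDiff ℝ n u) (hv : ContDiff ℝ n v) (hw : ContDiff ℝ n w) :
    ContDiff ℝ n (convexDefect θ u v w) :=
  ((hu.const_smul θ).add (hv.const_smul (1 - θ))).sub hw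

theorem gradient_convexDefect_add {F : Type*} [NormedAddCommGroup F] [InnerProductSpace ℝ F]
    [CompleteSpace F] {u v w Γ : F → ℝ} {x : F} (hu : DifferentiableAt ℝ u x)
    (hv : DifferentiableAt ℝ v x) (hw : DifferentiableAt ℝ w x) (hΓ : DifferentiableAt ℝ Γ x) :
    gradient (convexDefect θ u v w + Γ) x
      = θ • gradient u x + (1 - θ) • gradient v x - gradient w x + gradient Γ x := by
  have hu' : DifferentiableAt ℝ (θ • u) x := hu.const_smul θ
  have hv' : DifferentiableAt ℝ ((1 - θ) • v) x := hv.const_smul (1 - θ)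
  rw [convexDefect, gradient_add ((hu'.add hv').sub hw) hΓ, gradient_sub (hu'.add hv') hw,
    gradient_add hu' hv', gradient_const_smul θ hu, gradient_const_smul _ hv]

variable {d : ℕ}

theorem lap_convexDefect_add {u v w Γ : Euc d → ℝ} {x : Euc d} (hu : ContDiffAt ℝ 2 u x)
    (hv : ContDiffAt ℝ 2 v x) (hw : ContDiffAt ℝ 2 w x) (hΓ : ContDiffAt ℝ 2 Γ x) :
    lap (convexDefect θ u v w + Γ) x = θ * lap u x + (1 - θ) * lap v x - lap w x + lap Γ x := by
  have hu' : ContDiffAt ℝ 2 (θ • u) x := hu.const_smul θ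
  have hv' : ContDiffAt ℝ 2 ((1 - θ) • v) x := hv.const_smul (1 - θ)
  have h₁₂ : ContDiffAt ℝ 2 (θ • u + (1 - θ) • v) x := hu'.add hv'
  have h₁₂₃ : ContDiffAt ℝ 2 (θ • u + (1 - θ) • v - w) x := h₁₂.sub hw
  rw [convexDefect, lap_add h₁₂₃ hΓ, lap_sub h₁₂ hw, lap_add hu' hv',
    lap_const_smul θ hu, lap_const_smul _ hv]

theorem IsLocalMax.convexDefect_add {u v w Γ : Euc d → ℝ} {x₀ : Euc d} (hu : ContDiff ℝ 2 u)
    (hv : ContDiff ℝ 2 v) (hw : ContDiff ℝ 2 w) (hΓ : ContDiff ℝ 2 Γ)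
    (hmax : IsLocalMax (convexDefect θ u v w + Γ) x₀) :
    θ • gradient u x₀ + (1 - θ) • gradient v x₀ - gradient w x₀ + gradient Γ x₀ = 0 ∧
      θ * lap u x₀ + (1 - θ) * lap v x₀ - lap w x₀ + lap Γ x₀ ≤ 0 := by
  have hD {f : Euc d → ℝ} (hf : ContDiff ℝ 2 f) : DifferentiableAt ℝ f x₀ :=
    hf.differentiable (by norm_num) x₀
  constructor
  · rw [← gradient_convexDefect_add (hD hu) (hD hv) (hD hw) (hD hΓ), gradient,
      hmax.fderiv_eq_zero, map_zero]
  · rw [← lap_convexDefect_add hu.contDiffAt hv.contDiffAt hw.contDiffAt hΓ.contDiffAt]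
    exact lap_nonpos_of_isLocalMax ((hu.convexDefect hv hw).add hΓ) hmax

theorem ZPer.convexDefect {u v w : Euc d → ℝ} (hu : ZPer u) (hv : ZPer v) (hw : ZPer w) :
    ZPer (convexDefect θ u v w) :=
  fun x k => by simp only [convexDefect_apply, hu x k, hv x k, hw x k]

end ConvexDefect

section CellEquation

variable {d : ℕ}

/-- Each equation of the cell system, with drift `b`, coupling coefficient `c` and source `s`:
the first one has `b = Dψ`, `c = ν²`, `s = ν¹ - Δψ`, the second one `b = 0`, `c = ν¹`, `s = ν²`. -/
def CellEq (b : Euc d → Euc d) (c s : Euc d → ℝ) (p : Euc d) (lam : ℝ) (φ φ' : Euc d → ℝ) :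
    Prop :=
  ∀ y, -lap φ y + ‖gradient φ y + p‖ ^ 2 - ⟪b y, gradient φ y + p⟫_ℝ
    + c y * Real.exp (φ y - φ' y) = s y + lam

variable {ψ ν₁ ν₂ φ₁ φ₂ : Euc d → ℝ} {p : Euc d} {lam : ℝ}

theorem IsCellSol.cellEq_fst (h : IsCellSol ψ ν₁ ν₂ p lam φ₁ φ₂) :
    CellEq (gradient ψ) ν₂ (ν₁ - lap ψ) p lam φ₁ φ₂ :=
  fun y => by
    rw [Pi.sub_apply]
    linarith [h.2.2.2.2.1 y]

theorem IsCellSol.cellEq_snd (h : IsCellSol ψ ν₁ ν₂ p lam φ₁ φ₂) :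
    CellEq 0 ν₁ ν₂ p lam φ₂ φ₁ :=
  fun y => by simpa using h.2.2.2.2.2 y

theorem IsCellSol.contDiff_fst (h : IsCellSol ψ ν₁ ν₂ p lam φ₁ φ₂) : ContDiff ℝ 2 φ₁ :=
  h.1.of_le (WithTop.coe_le_coe.2 le_top)

theorem IsCellSol.contDiff_snd (h : IsCellSol ψ ν₁ ν₂ p lam φ₁ φ₂) : ContDiff ℝ 2 φ₂ :=
  h.2.1.of_le (WithTop.coe_le_coe.2 le_top)

variable {b : Euc d → Euc d} {c s u u' v v' w w' Γ : Euc d → ℝ} {p₁ p₂ x₀ : Euc d}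
  {θ l₁ l₂ lb : ℝ}

theorem CellEq.comparison (hθ₀ : 0 ≤ θ) (hθ₁ : θ ≤ 1) (hu : CellEq b c s p₁ l₁ u u')
    (hv : CellEq b c s p₂ l₂ v v') (hw : CellEq b c s (θ • p₁ + (1 - θ) • p₂) lb w w')
    (hc : 0 ≤ c x₀) (hu₂ : ContDiff ℝ 2 u) (hv₂ : ContDiff ℝ 2 v) (hw₂ : ContDiff ℝ 2 w)
    (hΓ : ContDiff ℝ 2 Γ) (hmax : IsLocalMax (convexDefect θ u v w + Γ) x₀) :
    lap Γ x₀ - ⟪(2 : ℝ) • (gradient w x₀ + (θ • p₁ + (1 - θ) • p₂)) - b x₀, gradient Γ x₀⟫_ℝ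
      + θ * (1 - θ) * ‖gradient u x₀ - gradient v x₀ + (p₁ - p₂)‖ ^ 2
      + c x₀ * (Real.exp (θ * (u x₀ - u' x₀) + (1 - θ) * (v x₀ - v' x₀))
        - Real.exp (w x₀ - w' x₀))
      ≤ θ * l₁ + (1 - θ) * l₂ - lb := by
  obtain ⟨hgrad, hlap⟩ := hmax.convexDefect_add hu₂ hv₂ hw₂ hΓ
  have hexp := convexOn_exp.2 (Set.mem_univ (u x₀ - u' x₀)) (Set.mem_univ (v x₀ - v' x₀)) hθ₀
    (sub_nonneg.2 hθ₁) (add_sub_cancel θ 1)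
  simp only [smul_eq_mul] at hexp
  have hcombined : -(θ * lap u x₀ + (1 - θ) * lap v x₀ - lap w x₀)
        + (θ * ‖gradient u x₀ + p₁‖ ^ 2 + (1 - θ) * ‖gradient v x₀ + p₂‖ ^ 2
          - ‖gradient w x₀ + (θ • p₁ + (1 - θ) • p₂)‖ ^ 2)
        - (θ * ⟪b x₀, gradient u x₀ + p₁⟫_ℝ + (1 - θ) * ⟪b x₀, gradient v x₀ + p₂⟫_ℝ
          - ⟪b x₀, gradient w x₀ + (θ • p₁ + (1 - θ) • p₂)⟫_ℝ)
        + c x₀ * (θ * Real.exp (u x₀ - u' x₀) + (1 - θ) * Real.exp (v x₀ - v' x₀)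
          - Real.exp (w x₀ - w' x₀))
      = θ * l₁ + (1 - θ) * l₂ - lb := by
    linear_combination θ * hu x₀ + (1 - θ) * hv x₀ - hw x₀
  set A := gradient u x₀ + p₁
  set V := gradient v x₀ + p₂
  set W := gradient w x₀ + (θ • p₁ + (1 - θ) • p₂)
  set G := gradient Γ x₀
  have hX : θ • A + (1 - θ) • V = W - G := by
    simp only [A, V, W, G]
    linear_combination (norm := module) hgrad
  have hAV : A - V = gradient u x₀ - gradient v x₀ + (p₁ - p₂) := by
    simp only [A, V]
    abel
  have hnorm := norm_smul_add_one_sub_smul_sq θ A V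
  rw [hX, norm_sub_sq_real, hAV] at hnorm
  have hinner : θ * ⟪b x₀, A⟫_ℝ + (1 - θ) * ⟪b x₀, V⟫_ℝ = ⟪b x₀, W⟫_ℝ - ⟪b x₀, G⟫_ℝ := by
    rw [← real_inner_smul_right, ← real_inner_smul_right, ← inner_add_right, hX, inner_sub_right]
  rw [inner_sub_left, real_inner_smul_left]
  linarith [mul_le_mul_of_nonneg_left hexp hc, sq_nonneg ‖G‖]

theorem CellEq.comparison_of_le (hθ₀ : 0 ≤ θ) (hθ₁ : θ ≤ 1) (hu : CellEq b c s p₁ l₁ u u')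
    (hv : CellEq b c s p₂ l₂ v v') (hw : CellEq b c s (θ • p₁ + (1 - θ) • p₂) lb w w')
    (hc : 0 ≤ c x₀) (hu₂ : ContDiff ℝ 2 u) (hv₂ : ContDiff ℝ 2 v) (hw₂ : ContDiff ℝ 2 w)
    (hΓ : ContDiff ℝ 2 Γ) (hmax : IsLocalMax (convexDefect θ u v w + Γ) x₀)
    (hdom : convexDefect θ u' v' w' x₀ ≤ convexDefect θ u v w x₀)
    (hle : θ * l₁ + (1 - θ) * l₂ ≤ lb) :
    lap Γ x₀ - ⟪(2 : ℝ) • (gradient w x₀ + (θ • p₁ + (1 - θ) • p₂)) - b x₀, gradient Γ x₀⟫_ℝ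
      + θ * (1 - θ) * ‖gradient u x₀ - gradient v x₀ + (p₁ - p₂)‖ ^ 2 ≤ 0 := by
  have hgap : 0 ≤ c x₀ * (Real.exp (θ * (u x₀ - u' x₀) + (1 - θ) * (v x₀ - v' x₀))
      - Real.exp (w x₀ - w' x₀)) :=
    mul_nonneg hc (sub_nonneg.2 (Real.exp_le_exp.2
      (by linarith [sub_convexDefect (θ := θ) u u' v v' w w' x₀])))
  linarith [hu.comparison hθ₀ hθ₁ hv hw hc hu₂ hv₂ hw₂ hΓ hmax]

end CellEquation

section CellSystem

variable {d : ℕ} {ψ ν₁ ν₂ : Euc d → ℝ} {θ l₁ l₂ lb : ℝ} {p₁ p₂ : Euc d}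
  {u₁ u₂ v₁ v₂ w₁ w₂ : Euc d → ℝ}

theorem IsCellSol.sup_convexDefect_le (hψ : ContDiff ℝ 1 ψ) (hν₁ : ∀ y, 0 < ν₁ y)
    (hν₂ : ∀ y, 0 < ν₂ y) (hθ₀ : 0 < θ) (hθ₁ : θ < 1) (hu : IsCellSol ψ ν₁ ν₂ p₁ l₁ u₁ u₂)
    (hv : IsCellSol ψ ν₁ ν₂ p₂ l₂ v₁ v₂)
    (hw : IsCellSol ψ ν₁ ν₂ (θ • p₁ + (1 - θ) • p₂) lb w₁ w₂)
    (hle : θ * l₁ + (1 - θ) * l₂ ≤ lb) (x y : Euc d) :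
    (convexDefect θ u₁ v₁ w₁ ⊔ convexDefect θ u₂ v₂ w₂) x
      ≤ (convexDefect θ u₁ v₁ w₁ ⊔ convexDefect θ u₂ v₂ w₂) y := by
  set h₁ := convexDefect θ u₁ v₁ w₁
  set h₂ := convexDefect θ u₂ v₂ w₂
  by_contra! hne
  have hper : ZPer (h₁ ⊔ h₂) :=
    (hu.2.2.1.convexDefect hv.2.2.1 hw.2.2.1).sup (hu.2.2.2.1.convexDefect hv.2.2.2.1 hw.2.2.2.1)
  have hcont : Continuous (h₁ ⊔ h₂) :=
    (hu.contDiff_fst.convexDefect hv.contDiff_fst hw.contDiff_fst).continuous.sup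
      (hu.contDiff_snd.convexDefect hv.contDiff_snd hw.contDiff_snd).continuous
  have hdrift (w : Euc d → ℝ) (b : Euc d → Euc d) (hw : ContDiff ℝ 2 w) (hb : Continuous b) :
      Continuous fun y => (2 : ℝ) • (gradient w y + (θ • p₁ + (1 - θ) • p₂)) - b y := by
    have := (hw.of_le one_le_two).continuous_gradient
    fun_prop
  obtain ⟨Γ, hΓ, x₀, hmax, hpos⟩ := hper.exists_barrier hcont
    ((hdrift w₁ _ hw.contDiff_fst hψ.continuous_gradient).norm.max
      (hdrift w₂ 0 hw.contDiff_snd continuous_const).norm) ⟨y, x, hne⟩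
  have hθ : 0 ≤ θ * (1 - θ) := mul_nonneg hθ₀.le (sub_pos.2 hθ₁).le
  rcases le_total (h₂ x₀) (h₁ x₀) with hdom | hdom
  · have := hu.cellEq_fst.comparison_of_le hθ₀.le hθ₁.le hv.cellEq_fst hw.cellEq_fst
      (hν₂ x₀).le hu.contDiff_fst hv.contDiff_fst hw.contDiff_fst hΓ
      (isLocalMax_add_of_le hmax le_sup_left (sup_le le_rfl hdom)) hdom hle
    linarith [hpos _ (le_max_left _ _),
      mul_nonneg hθ (sq_nonneg ‖gradient u₁ x₀ - gradient v₁ x₀ + (p₁ - p₂)‖)]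
  · have := hu.cellEq_snd.comparison_of_le hθ₀.le hθ₁.le hv.cellEq_snd hw.cellEq_snd
      (hν₁ x₀).le hu.contDiff_snd hv.contDiff_snd hw.contDiff_snd hΓ
      (isLocalMax_add_of_le hmax le_sup_right (sup_le hdom le_rfl)) hdom hle
    linarith [hpos _ (le_max_right _ _),
      mul_nonneg hθ (sq_nonneg ‖gradient u₂ x₀ - gradient v₂ x₀ + (p₁ - p₂)‖)]

theorem IsCellSol.eq_of_sup_convexDefect_le (hν₁ : ∀ y, 0 < ν₁ y) (hν₂ : ∀ y, 0 < ν₂ y)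
    (hθ₀ : 0 < θ) (hθ₁ : θ < 1) (hu : IsCellSol ψ ν₁ ν₂ p₁ l₁ u₁ u₂)
    (hv : IsCellSol ψ ν₁ ν₂ p₂ l₂ v₁ v₂)
    (hw : IsCellSol ψ ν₁ ν₂ (θ • p₁ + (1 - θ) • p₂) lb w₁ w₂)
    (hle : θ * l₁ + (1 - θ) * l₂ ≤ lb)
    (hconst : ∀ x y, (convexDefect θ u₁ v₁ w₁ ⊔ convexDefect θ u₂ v₂ w₂) x
      ≤ (convexDefect θ u₁ v₁ w₁ ⊔ convexDefect θ u₂ v₂ w₂) y) :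
    p₁ = p₂ := by
  set h₁ := convexDefect θ u₁ v₁ w₁
  set h₂ := convexDefect θ u₂ v₂ w₂
  have hmax (y : Euc d) : ∀ z, (h₁ ⊔ h₂) z + 0 ≤ (h₁ ⊔ h₂) y + 0 := fun z => by
    simpa using hconst z y
  have hθ : 0 < θ * (1 - θ) := mul_pos hθ₀ (sub_pos.2 hθ₁)
  have h₂_le (y : Euc d) : h₂ y ≤ h₁ y := by
    by_contra! hlt
    have hcmp := hu.cellEq_snd.comparison (Γ := 0) hθ₀.le hθ₁.le hv.cellEq_snd hw.cellEq_snd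
      (hν₁ y).le hu.contDiff_snd hv.contDiff_snd hw.contDiff_snd contDiff_const
      (isLocalMax_add_of_le (hmax y) le_sup_right (sup_le hlt.le le_rfl))
    have hgap : 0 < ν₁ y * (Real.exp (θ * (u₂ y - u₁ y) + (1 - θ) * (v₂ y - v₁ y))
        - Real.exp (w₂ y - w₁ y)) :=
      mul_pos (hν₁ y) (sub_pos.2 (Real.exp_lt_exp.2
        (by linarith [sub_convexDefect (θ := θ) u₂ u₁ v₂ v₁ w₂ w₁ y])))
    rw [lap_zero, gradient_zero, inner_zero_right, sub_zero, zero_add] at hcmp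
    linarith [mul_nonneg hθ.le (sq_nonneg ‖gradient u₂ y - gradient v₂ y + (p₁ - p₂)‖)]
  have hgrad (y : Euc d) : gradient (u₁ - v₁) y = p₂ - p₁ := by
    have hsq := hu.cellEq_fst.comparison_of_le (Γ := 0) hθ₀.le hθ₁.le hv.cellEq_fst
      hw.cellEq_fst (hν₂ y).le hu.contDiff_fst hv.contDiff_fst hw.contDiff_fst contDiff_const
      (isLocalMax_add_of_le (hmax y) le_sup_left (sup_le le_rfl (h₂_le y))) (h₂_le y) hle
    rw [lap_zero, gradient_zero, inner_zero_right, sub_zero, zero_add,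
      ← mul_zero (θ * (1 - θ))] at hsq
    have hzero := norm_eq_zero.1 <| pow_eq_zero_iff two_ne_zero |>.1 <|
      le_antisymm (le_of_mul_le_mul_left hsq hθ) (sq_nonneg _)
    rw [gradient_sub (hu.contDiff_fst.differentiable (by norm_num) y)
      (hv.contDiff_fst.differentiable (by norm_num) y)]
    linear_combination (norm := module) hzero
  have hdiff := (hu.contDiff_fst.sub hv.contDiff_fst).differentiable (by norm_num)
  exact (sub_eq_zero.1 ((hu.2.2.1.sub hv.2.2.1).eq_zero_of_gradient_eq hdiff hgrad)).symm

end CellSystem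

theorem effective_hamiltonian_strictly_convex_general
    {d : ℕ} (ψ ν1 ν2 : Euc d → ℝ) (hdata : GoodData ψ ν1 ν2)
    (Hbar : Euc d → ℝ)
    (hHbar : ∀ (p : Euc d) (lam : ℝ),
      (∃ φ1 φ2 : Euc d → ℝ, IsCellSol ψ ν1 ν2 p lam φ1 φ2) ↔ lam = Hbar p) :
    ∀ p₁ p₂ : Euc d, p₁ ≠ p₂ → ∀ θ : ℝ, 0 < θ → θ < 1 →
      Hbar (θ • p₁ + (1 - θ) • p₂) < θ * Hbar p₁ + (1 - θ) * Hbar p₂ := by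
  obtain ⟨hψ, -, -, -, -, -, hν₁, hν₂⟩ := hdata
  intro p₁ p₂ hne θ hθ₀ hθ₁
  obtain ⟨u₁, u₂, hu⟩ := (hHbar p₁ _).2 rfl
  obtain ⟨v₁, v₂, hv⟩ := (hHbar p₂ _).2 rfl
  obtain ⟨w₁, w₂, hw⟩ := (hHbar (θ • p₁ + (1 - θ) • p₂) _).2 rfl
  by_contra! hle
  have hconst := hu.sup_convexDefect_le (hψ.of_le (WithTop.coe_le_coe.2 le_top)) hν₁ hν₂ hθ₀
    hθ₁ hv hw hle
  exact hne (hu.eq_of_sup_convexDefect_le hν₁ hν₂ hθ₀ hθ₁ hv hw hle hconst)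

/-- **Lemma 2.1.** The effective Hamiltonian `H̄` is strictly convex. -/
theorem effective_hamiltonian_strictly_convex
    {d : ℕ} (hd : 1 ≤ d) (ψ ν1 ν2 : Euc d → ℝ) (hdata : GoodData ψ ν1 ν2)
    (Hbar : Euc d → ℝ)
    (hHbar : ∀ (p : Euc d) (lam : ℝ),
      (∃ φ1 φ2 : Euc d → ℝ, IsCellSol ψ ν1 ν2 p lam φ1 φ2) ↔ lam = Hbar p) :
    ∀ p₁ p₂ : Euc d, p₁ ≠ p₂ → ∀ θ : ℝ, 0 < θ → θ < 1 →
      Hbar (θ • p₁ + (1 - θ) • p₂) < θ * Hbar p₁ + (1 - θ) * Hbar p₂ :=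
  effective_hamiltonian_strictly_convex_general ψ ν1 ν2 hdata Hbar hHbar

end
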